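/- arXiv:1207.1837 — 2 statements merged into one kernel-verified Lean document; each statement's English description precedes it below -/
import Mathlib

section
/- Let Y be a complete CAT(0) metric space and let a group G act on Y by isometries. If some orbit of G is bounded, then G has a global fixed point in Y. -/
def IsCAT0 (Y : Type*) [MetricSpace Y] : Prop :=
  ∀ x y : Y, ∃ m : Y, 2 * dist x m = dist x y ∧ 2 * dist y m = dist x y ∧
    ∀ z : Y, dist z m ^ 2 ≤ (dist z x ^ 2 + dist z y ^ 2) / 2 - dist x y ^ 2 / 4

/-- Bruhat–Tits fixed point theorem: a group acting by isometries on a complete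
CAT(0) space with a bounded orbit has a global fixed point. -/
theorem stmt_1 {Y G : Type*} [MetricSpace Y] [CompleteSpace Y] [Group G] [MulAction G Y]
    (hY : IsCAT0 Y) (hiso : ∀ g : G, Isometry (fun y : Y => g • y))
    (hbdd : ∃ y : Y, Bornology.IsBounded (Set.range fun g : G => g • y)) :
    ∃ y : Y, ∀ g : G, g • y = y := by
  obtain ⟨y₀, hb⟩ := hbdd
  haveI : Nonempty Y := ⟨y₀⟩
  obtain ⟨ρ, hρ⟩ := (Metric.isBounded_iff_subset_closedBall y₀).1 hb
  -- boundedness of distances to the orbit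
  have hbdd' : ∀ x : Y, BddAbove (Set.range fun g : G => dist x (g • y₀)) := by
    intro x
    refine ⟨dist x y₀ + ρ, ?_⟩
    rintro d ⟨g, rfl⟩
    have hg : (g • y₀) ∈ Metric.closedBall y₀ ρ := hρ ⟨g, rfl⟩
    have := Metric.mem_closedBall.1 hg
    calc dist x (g • y₀) ≤ dist x y₀ + dist y₀ (g • y₀) := dist_triangle _ _ _
      _ ≤ dist x y₀ + ρ := by rw [dist_comm y₀]; linarith
  set R : Y → ℝ := fun x => ⨆ g : G, dist x (g • y₀) with hRdef
  have hRle : ∀ (x : Y) (g : G), dist x (g • y₀) ≤ R x := fun x g =>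
    le_ciSup (hbdd' x) g
  have hR0 : ∀ x : Y, 0 ≤ R x := fun x => dist_nonneg.trans (hRle x 1)
  have hRlip : ∀ x y : Y, R x ≤ R y + dist x y := by
    intro x y
    refine ciSup_le fun g => ?_
    calc dist x (g • y₀) ≤ dist x y + dist y (g • y₀) := dist_triangle _ _ _
      _ ≤ dist x y + R y := by linarith [hRle y g]
      _ = R y + dist x y := by ring
  -- invariance of R under the action
  have hdist_g : ∀ (g h : G) (x : Y), dist (g • x) (h • y₀) = dist x ((g⁻¹ * h) • y₀) := by
    intro g h x
    have := (hiso g⁻¹).dist_eq (g • x) (h • y₀)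
    simpa [smul_smul] using this.symm
  have hRinv : ∀ (g : G) (x : Y), R (g • x) = R x := by
    intro g x
    apply le_antisymm
    · refine ciSup_le fun h => ?_
      rw [hdist_g g h x]
      exact hRle x _
    · refine ciSup_le fun h => ?_
      have : dist x (h • y₀) = dist (g • x) ((g * h) • y₀) := by
        rw [hdist_g g (g * h) x, inv_mul_cancel_left]
      rw [this]
      exact hRle (g • x) _
  set r : ℝ := ⨅ x : Y, R x with hrdef
  have hbb : BddBelow (Set.range R) := ⟨0, by rintro d ⟨x, rfl⟩; exact hR0 x⟩
  have hrle : ∀ x : Y, r ≤ R x := fun x => ciInf_le hbb x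
  have hr0 : 0 ≤ r := le_ciInf hR0
  -- key CAT(0) inequality
  have hkey : ∀ x y : Y, dist x y ^ 2 ≤ 2 * (R x ^ 2 - r ^ 2) + 2 * (R y ^ 2 - r ^ 2) := by
    intro x y
    obtain ⟨m, -, -, hm⟩ := hY x y
    set A : ℝ := (R x ^ 2 + R y ^ 2) / 2 - dist x y ^ 2 / 4 with hAdef
    have hgA : ∀ g : G, dist (g • y₀) m ^ 2 ≤ A := by
      intro g
      have h1 : dist (g • y₀) x ≤ R x := by rw [dist_comm]; exact hRle x g
      have h2 : dist (g • y₀) y ≤ R y := by rw [dist_comm]; exact hRle y g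
      have h1' : (0:ℝ) ≤ dist (g • y₀) x := dist_nonneg
      have h2' : (0:ℝ) ≤ dist (g • y₀) y := dist_nonneg
      have := hm (g • y₀)
      rw [hAdef]
      nlinarith
    have hA0 : 0 ≤ A := (sq_nonneg _).trans (hgA 1)
    have hRm : R m ≤ Real.sqrt A := by
      refine ciSup_le fun g => ?_
      have := Real.sqrt_le_sqrt (hgA g)
      rwa [Real.sqrt_sq dist_nonneg, dist_comm] at this
    have hrA : r ^ 2 ≤ A := by
      have h1 : r ≤ Real.sqrt A := (hrle m).trans hRm
      have := pow_le_pow_left₀ hr0 h1 2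
      rwa [Real.sq_sqrt hA0] at this
    rw [hAdef] at hrA
    linarith
  -- minimizing sequence
  have hex : ∀ n : ℕ, ∃ x : Y, R x < r + ((n : ℝ) + 1)⁻¹ := by
    intro n
    apply exists_lt_of_ciInf_lt
    have : (0:ℝ) < ((n : ℝ) + 1)⁻¹ := by positivity
    linarith
  choose seq hseq using hex
  have hcauchy : CauchySeq seq := by
    rw [Metric.cauchySeq_iff']
    intro ε hε
    obtain ⟨N, hN⟩ := exists_nat_gt ((4 * (2 * r + 1)) / ε ^ 2)
    refine ⟨N, fun n hn => ?_⟩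
    set e : ℝ := ((N : ℝ) + 1)⁻¹ with hedef
    have hN1 : (0:ℝ) < (N : ℝ) + 1 := by positivity
    have he0 : 0 < e := by positivity
    have hee : e * ((N : ℝ) + 1) = 1 := inv_mul_cancel₀ hN1.ne'
    have he1 : e ≤ 1 := by
      nlinarith [Nat.cast_nonneg (α := ℝ) N]
    have hεA : e * (4 * (2 * r + 1)) < ε ^ 2 := by
      have h4 : 4 * (2 * r + 1) < ((N : ℝ) + 1) * ε ^ 2 := by
        have := (div_lt_iff₀ (by positivity : (0:ℝ) < ε ^ 2)).1 hN
        nlinarith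
      nlinarith
    have hen : ((n : ℝ) + 1)⁻¹ ≤ e := by
      rw [hedef]
      apply inv_anti₀ hN1
      have : (N : ℝ) ≤ (n : ℝ) := by exact_mod_cast hn
      linarith
    have hRn : R (seq n) ≤ r + e := (hseq n).le.trans (by linarith)
    have hRN : R (seq N) ≤ r + e := (hseq N).le
    have key := hkey (seq n) (seq N)
    have hd0 : (0:ℝ) ≤ dist (seq n) (seq N) := dist_nonneg
    have hRn0 := hR0 (seq n)
    have hRN0 := hR0 (seq N)
    nlinarith [sq_nonneg (dist (seq n) (seq N))]
  obtain ⟨c, hc⟩ := cauchySeq_tendsto_of_complete hcauchy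
  have hRc : R c ≤ r := by
    have htend : Filter.Tendsto (fun n : ℕ => r + ((n : ℝ) + 1)⁻¹ + dist c (seq n))
        Filter.atTop (nhds r) := by
      have h1 : Filter.Tendsto (fun n : ℕ => ((n : ℝ) + 1)⁻¹) Filter.atTop (nhds 0) :=
        tendsto_one_div_add_atTop_nhds_zero_nat.congr (by intro n; rw [one_div])
      have h2 : Filter.Tendsto (fun n : ℕ => dist c (seq n)) Filter.atTop (nhds 0) := by
        have := tendsto_iff_dist_tendsto_zero.1 hc
        simpa [dist_comm] using this
      have := (tendsto_const_nhds (x := r) (f := Filter.atTop (α := ℕ))).add h1 |>.add h2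
      simpa using this
    refine ge_of_tendsto' htend fun n => ?_
    calc R c ≤ R (seq n) + dist c (seq n) := hRlip c (seq n)
      _ ≤ r + ((n : ℝ) + 1)⁻¹ + dist c (seq n) := by linarith [(hseq n).le]
  refine ⟨c, fun g => ?_⟩
  have key := hkey c (g • c)
  rw [hRinv g c] at key
  have hrc : r ≤ R c := hrle c
  have : dist c (g • c) = 0 := by nlinarith [dist_nonneg (x := c) (y := g • c)]
  exact (dist_eq_zero.1 this).symm
end

section
/- In a group G acting by semisimple isometries on a complete CAT(0) space, if g ∈ G satisfies g^m ∈ [N,N] for some m > 0, where N is a finitely generated torsion-free nilpotent subgroup such that either N has a fixed point or N preserves a flat on which it acts by translations factoring through an abelian group, then g has a fixed point. In particular: if g^m lies in the commutator subgroup [N,N] and N acts on a flat by translations through an abelian quotient, then g^m acts trivially on that flat, hence g is elliptic. -/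
/-- A monoid is torsion-free if every non-identity element has infinite order
(the definition removed from Mathlib, restored with its old meaning). -/
def Monoid.IsTorsionFree (G : Type*) [Monoid G] : Prop :=
  ∀ g : G, g ≠ 1 → ¬IsOfFinOrder g

/-! The CAT(0) inequality makes `x ↦ max_{s ∈ S} d(x, s)²` uniformly convex along midpoints for
every finite set `S`, so on a complete space it has a unique minimiser, the circumcentre of `S`.
An isometry permuting `S` fixes the circumcentre; applied to the orbit `y, g y, …, g^{m-1} y` of a
fixed point `y` of `g^m`, this shows that `g` is elliptic as soon as `g^m` is. Finally `g^m` fixes a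
point: either every element of `N` does, or `g^m ∈ [N,N]` lies in the kernel of the translation
homomorphism `N → ℝ^k` and so acts trivially on the flat. -/

open Filter Topology Function

section MidpointConvex

variable {Y : Type*} [MetricSpace Y] {F : Y → ℝ}

theorem eq_of_forall_le_of_midpoint_le
    (hF : ∀ x y : Y, ∃ z, F z ≤ (F x + F y) / 2 - dist x y ^ 2 / 4)
    {x y : Y} (hx : ∀ z, F x ≤ F z) (hy : ∀ z, F y ≤ F z) : x = y := by
  obtain ⟨z, hz⟩ := hF x y
  have hsq : dist x y ^ 2 ≤ 0 := by linarith [hx z, hy z]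
  exact dist_le_zero.mp (by nlinarith [dist_nonneg (x := x) (y := y)])

theorem exists_forall_le_of_midpoint_le [CompleteSpace Y] [Nonempty Y]
    (hFc : Continuous F) (hFb : BddBelow (Set.range F))
    (hF : ∀ x y : Y, ∃ z, F z ≤ (F x + F y) / 2 - dist x y ^ 2 / 4) :
    ∃ c, ∀ z, F c ≤ F z := by
  set μ := ⨅ z, F z
  have hμ : ∀ z, μ ≤ F z := ciInf_le hFb
  set ε : ℕ → ℝ := fun n => 1 / ((n : ℝ) + 1)
  have hε : Tendsto ε atTop (𝓝 0) := tendsto_one_div_add_atTop_nhds_zero_nat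
  have hminimizing : ∀ n, ∃ x, F x < μ + ε n ^ 2 := fun n =>
    exists_lt_of_ciInf_lt (lt_add_of_pos_right μ (by positivity))
  choose x hx using hminimizing
  -- the midpoint of `x n` and `x k` cannot go below `μ`, which forces `x n` and `x k` together
  have hdist : ∀ n k N, N ≤ n → N ≤ k → dist (x n) (x k) ≤ 2 * ε N := by
    intro n k N hn hk
    obtain ⟨z, hz⟩ := hF (x n) (x k)
    have hεn : ε n ^ 2 ≤ ε N ^ 2 := by gcongr; exact Nat.one_div_le_one_div hn
    have hεk : ε k ^ 2 ≤ ε N ^ 2 := by gcongr; exact Nat.one_div_le_one_div hk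
    have hsq : dist (x n) (x k) ^ 2 ≤ (2 * ε N) ^ 2 := by
      linarith [hμ z, hx n, hx k]
    exact (pow_le_pow_iff_left₀ dist_nonneg (by positivity) two_ne_zero).mp hsq
  have hcauchy : CauchySeq x :=
    cauchySeq_of_le_tendsto_0 _ hdist (by simpa using hε.const_mul 2)
  obtain ⟨c, hc⟩ := cauchySeq_tendsto_of_complete hcauchy
  have hFx : Tendsto (F ∘ x) atTop (𝓝 μ) := by
    refine tendsto_of_tendsto_of_tendsto_of_le_of_le tendsto_const_nhds ?_
      (fun n => hμ (x n)) (fun n => (hx n).le)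
    simpa using tendsto_const_nhds.add (hε.pow 2)
  have hcμ : F c = μ := tendsto_nhds_unique ((hFc.tendsto c).comp hc) hFx
  exact ⟨c, fun z => hcμ ▸ hμ z⟩

end MidpointConvex

noncomputable def radiusSqAbout {Y : Type*} [MetricSpace Y] (S : Finset Y) (hS : S.Nonempty)
    (x : Y) : ℝ :=
  S.sup' hS fun s => dist x s ^ 2

section RadiusSqAbout

variable {Y : Type*} [MetricSpace Y] {S : Finset Y} (hS : S.Nonempty)

theorem dist_sq_le_radiusSqAbout (x : Y) {s : Y} (hs : s ∈ S) :
    dist x s ^ 2 ≤ radiusSqAbout S hS x :=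
  Finset.le_sup' (fun s => dist x s ^ 2) hs

theorem radiusSqAbout_nonneg (x : Y) : 0 ≤ radiusSqAbout S hS x :=
  (sq_nonneg _).trans (dist_sq_le_radiusSqAbout hS x hS.choose_spec)

theorem continuous_radiusSqAbout : Continuous (radiusSqAbout S hS) :=
  Continuous.finset_sup'_apply hS fun _ _ => (continuous_id.dist continuous_const).pow 2

end RadiusSqAbout

namespace IsCAT0

variable {Y : Type*} [MetricSpace Y]

theorem exists_radiusSqAbout_le (hY : IsCAT0 Y) (S : Finset Y) (hS : S.Nonempty) (x y : Y) :
    ∃ z, radiusSqAbout S hS z ≤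
      (radiusSqAbout S hS x + radiusSqAbout S hS y) / 2 - dist x y ^ 2 / 4 := by
  obtain ⟨z, -, -, hz⟩ := hY x y
  refine ⟨z, Finset.sup'_le hS _ fun s hs => ?_⟩
  have hsx := dist_sq_le_radiusSqAbout hS x hs
  have hsy := dist_sq_le_radiusSqAbout hS y hs
  simp only [dist_comm _ s] at hsx hsy ⊢
  linarith [hz s]

theorem exists_isFixedPt_of_isometry [CompleteSpace Y] (hY : IsCAT0 Y) {f : Y → Y}
    (hf : Isometry f) (S : Finset Y) (hS : S.Nonempty) (hSf : ∀ s ∈ S, ∃ t ∈ S, f t = s) :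
    ∃ c, IsFixedPt f c := by
  have : Nonempty Y := hS.to_subtype.map Subtype.val
  have hbdd : BddBelow (Set.range (radiusSqAbout S hS)) :=
    ⟨0, Set.forall_mem_range.mpr (radiusSqAbout_nonneg hS)⟩
  obtain ⟨c, hc⟩ := exists_forall_le_of_midpoint_le (continuous_radiusSqAbout hS) hbdd
    (hY.exists_radiusSqAbout_le S hS)
  have hfc : radiusSqAbout S hS (f c) ≤ radiusSqAbout S hS c := by
    refine Finset.sup'_le hS _ fun s hs => ?_
    obtain ⟨t, ht, rfl⟩ := hSf s hs
    rw [hf.dist_eq]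
    exact dist_sq_le_radiusSqAbout hS c ht
  exact ⟨c, eq_of_forall_le_of_midpoint_le (hY.exists_radiusSqAbout_le S hS)
    (fun z => hfc.trans (hc z)) hc⟩

theorem exists_isFixedPt_of_isPeriodicPt [CompleteSpace Y] (hY : IsCAT0 Y) {f : Y → Y}
    (hf : Isometry f) {m : ℕ} (hm : 0 < m) {y : Y} (hy : IsPeriodicPt f m y) :
    ∃ c, IsFixedPt f c := by
  classical
  refine hY.exists_isFixedPt_of_isometry hf ((Finset.range m).image (f^[·] y))
    ⟨y, Finset.mem_image.mpr ⟨0, Finset.mem_range.mpr hm, rfl⟩⟩ ?_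
  simp only [Finset.mem_image, Finset.mem_range, exists_exists_and_eq_and]
  rintro _ ⟨_ | i, hi, rfl⟩
  · refine ⟨m - 1, by omega, ?_⟩
    rw [← iterate_succ_apply' f]
    simpa [Nat.sub_add_cancel hm] using hy.eq
  · exact ⟨i, by omega, (iterate_succ_apply' f i y).symm⟩

theorem exists_smul_eq_of_pow_smul_eq [CompleteSpace Y] (hY : IsCAT0 Y) {G : Type*} [Group G]
    [MulAction G Y] {g : G} (hg : Isometry (g • · : Y → Y)) {m : ℕ} (hm : 0 < m) {y : Y}
    (hy : g ^ m • y = y) : ∃ c : Y, g • c = c :=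
  hY.exists_isFixedPt_of_isPeriodicPt hg hm (by rwa [IsPeriodicPt, IsFixedPt, smul_iterate])

end IsCAT0

theorem eq_zero_of_mem_commutator {G A : Type*} [Group G] [AddCommGroup A] {N : Subgroup G}
    {v : G → A} (hv : ∀ a ∈ N, ∀ b ∈ N, v (a * b) = v a + v b) {x : G} (hx : x ∈ ⁅N, N⁆) :
    v x = 0 := by
  let ψ : N →* Multiplicative A :=
    MonoidHom.mk' (fun n => Multiplicative.ofAdd (v n)) fun a b => hv a a.2 b b.2
  rw [← N.map_subtype_commutator] at hx
  obtain ⟨n, hn, rfl⟩ := hx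
  exact congrArg Multiplicative.toAdd (Abelianization.commutator_subset_ker ψ hn)

theorem stmt_7_general {Y G : Type*} [MetricSpace Y] [CompleteSpace Y] [Group G] [MulAction G Y]
    (hY : IsCAT0 Y) (hiso : ∀ h : G, Isometry (fun y : Y => h • y))
    (N : Subgroup G)
    (halt : (∃ y : Y, ∀ n ∈ N, n • y = y) ∨
      ∃ (k : ℕ) (φ : EuclideanSpace ℝ (Fin k) → Y) (v : G → EuclideanSpace ℝ (Fin k)),
        Isometry φ ∧
        (∀ n ∈ N, ∀ x : EuclideanSpace ℝ (Fin k), n • φ x = φ (x + v n)) ∧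
        (∀ n₁ ∈ N, ∀ n₂ ∈ N, v (n₁ * n₂) = v n₁ + v n₂))
    (g : G) (m : ℕ) (hm : 0 < m) (hgm : g ^ m ∈ ⁅N, N⁆) :
    ∃ y : Y, g • y = y := by
  suffices ∃ y : Y, g ^ m • y = y by
    obtain ⟨y, hy⟩ := this
    exact hY.exists_smul_eq_of_pow_smul_eq (hiso g) hm hy
  have hgN : g ^ m ∈ N := N.commutator_le_self hgm
  rcases halt with ⟨y, hy⟩ | ⟨k, φ, v, -, hact, hadd⟩
  · exact ⟨y, hy _ hgN⟩
  · exact ⟨φ 0, by rw [hact _ hgN, eq_zero_of_mem_commutator hadd hgm, add_zero]⟩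

/-- Let `G` act by semisimple isometries on a complete CAT(0) space and let `N ≤ G` be a
finitely generated torsion-free nilpotent subgroup which either has a global fixed point
or preserves a flat (the isometric image `φ` of Euclidean `k`-space) on which it acts by
translations `v`, additively (hence factoring through an abelian group).  If `g^m ∈ [N,N]`
for some `m > 0`, then `g` has a fixed point. -/
theorem stmt_7 {Y G : Type*} [MetricSpace Y] [CompleteSpace Y] [Group G] [MulAction G Y]
    (hY : IsCAT0 Y) (hiso : ∀ h : G, Isometry (fun y : Y => h • y))
    (hss : ∀ h : G, ∃ y : Y, dist y (h • y) = ⨅ z : Y, dist z (h • z))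
    (N : Subgroup G) [Group.IsNilpotent N] (htf : Monoid.IsTorsionFree N) (hfg : Group.FG N)
    (halt : (∃ y : Y, ∀ n ∈ N, n • y = y) ∨
      ∃ (k : ℕ) (φ : EuclideanSpace ℝ (Fin k) → Y) (v : G → EuclideanSpace ℝ (Fin k)),
        Isometry φ ∧
        (∀ n ∈ N, ∀ x : EuclideanSpace ℝ (Fin k), n • φ x = φ (x + v n)) ∧
        (∀ n₁ ∈ N, ∀ n₂ ∈ N, v (n₁ * n₂) = v n₁ + v n₂))
    (g : G) (m : ℕ) (hm : 0 < m) (hgm : g ^ m ∈ ⁅N, N⁆) :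
    ∃ y : Y, g • y = y :=
  stmt_7_general hY hiso N halt g m hm hgm
end
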